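/- No directed cycle of the envy digraph G^DA(P) contains both an advantaged and a marginalized student: every directed cycle of G^DA(P) lies entirely within Y or entirely within Z. -/
import Mathlib


/-!
A school choice problem: finitely many students `I` and schools `S`
(with a distinguished null school of quota `|I|`).  Each student `i` has a
strict preference over schools represented by its rank function
`rk i : S → ℕ` (a bijection onto `{1, …, |S|}`, where rank 1 is the most
preferred school); each school `s` has a quota `quota s ≥ 1` and a strict
priority over students represented by `prio s : I → ℕ`
(`i ▷_s j` iff `prio s i < prio s j`).
-/
structure SchoolChoice (I S : Type) [Fintype I] [Fintype S]
    [DecidableEq I] [DecidableEq S] where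
  nullSchool : S
  quota : S → ℕ
  rk : I → S → ℕ
  prio : S → I → ℕ
  quota_pos : ∀ s : S, 1 ≤ quota s
  quota_null : quota nullSchool = Fintype.card I
  rk_inj : ∀ i : I, Function.Injective (rk i)
  rk_mem : ∀ (i : I) (s : S), rk i s ∈ Finset.Icc 1 (Fintype.card S)
  prio_inj : ∀ s : S, Function.Injective (prio s)

namespace SchoolChoice

open scoped Classical

variable {I S : Type} [Fintype I] [Fintype S] [DecidableEq I] [DecidableEq S]

/-- `μ` is a matching: no school is assigned more students than its quota. -/
def IsMatching (P : SchoolChoice I S) (μ : I → S) : Prop :=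
  ∀ s : S, (Finset.univ.filter fun i => μ i = s).card ≤ P.quota s

/-- Given the sets `R i` of schools that have rejected student `i` so far,
student `i` proposes to her most preferred school that has not rejected her. -/
noncomputable def propose (P : SchoolChoice I S) (R : I → Finset S) (i : I) : S :=
  if h : (Finset.univ \ R i).Nonempty then
    (Finset.exists_min_image (Finset.univ \ R i) (P.rk i) h).choose
  else P.nullSchool

/-- At the DA round with rejection state `R`, school `s` rejects student `i`:
`i` applies to `s` and at least `quota s` applicants to `s` have higher priority. -/
def rejectsAt (P : SchoolChoice I S) (R : I → Finset S) (s : S) (i : I) : Prop :=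
  P.propose R i = s ∧
    P.quota s ≤ (Finset.univ.filter fun j =>
      P.propose R j = s ∧ P.prio s j < P.prio s i).card

/-- One round of student-proposing Deferred Acceptance: record new rejections. -/
noncomputable def stepR (P : SchoolChoice I S) (R : I → Finset S) : I → Finset S :=
  fun i => R i ∪ (Finset.univ.filter fun s => P.rejectsAt R s i)

/-- Rejection state after `n` rounds of Deferred Acceptance. -/
noncomputable def daR (P : SchoolChoice I S) : ℕ → I → Finset S
  | 0 => fun _ => (∅ : Finset S)
  | n + 1 => P.stepR (P.daR n)

/-- The outcome of the student-proposing Deferred Acceptance algorithm: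
iterate rounds until no rejection occurs (which happens within
`|I|·|S| + 1` rounds); each student is matched to the school holding her. -/
noncomputable def DA (P : SchoolChoice I S) : I → S :=
  P.propose (P.daR (Fintype.card I * Fintype.card S + 1))

/-- A matching `ν` is stable-dominating if every student weakly prefers
`ν` to the DA outcome. -/
def StableDominating (P : SchoolChoice I S) (ν : I → S) : Prop :=
  P.IsMatching ν ∧ ∀ i : I, P.rk i (ν i) ≤ P.rk i (P.DA i)

/-- Student `i` is unimprovable: every stable-dominating matching assigns `i`
to her DA school. -/
def Unimprovable (P : SchoolChoice I S) (i : I) : Prop :=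
  ∀ ν : I → S, P.StableDominating ν → ν i = P.DA i

/-- Edge of the envy digraph `G^DA(P)`: `i` prefers `j`'s DA school to her own. -/
def Envy (P : SchoolChoice I S) (i j : I) : Prop :=
  P.rk i (P.DA j) < P.rk i (P.DA i)

/-- Student `i` lies on a directed cycle of the envy digraph `G^DA(P)`. -/
def OnCycle (P : SchoolChoice I S) (i : I) : Prop :=
  ∃ (m : ℕ) (c : ℕ → I), 0 < m ∧ c 0 = i ∧ c m = i ∧
    ∀ k < m, P.Envy (c k) (c (k + 1))

/-- Student `i` desires school `s` in matching `μ`. -/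
def Desires (P : SchoolChoice I S) (μ : I → S) (i : I) (s : S) : Prop :=
  P.rk i s < P.rk i (μ i)

/-- `μ` is non-wasteful: every desired school is filled to quota. -/
def NonWasteful (P : SchoolChoice I S) (μ : I → S) : Prop :=
  ∀ s : S, (∃ i : I, P.Desires μ i s) →
    (Finset.univ.filter fun i => μ i = s).card = P.quota s

/-- `μ` is stable: a non-wasteful matching with no priority violations. -/
def Stable (P : SchoolChoice I S) (μ : I → S) : Prop :=
  P.IsMatching μ ∧ P.NonWasteful μ ∧
    ¬ ∃ (i j : I) (s : S), P.Desires μ i s ∧ μ j = s ∧ P.prio s i < P.prio s j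

/-- `μ` Pareto-dominates `ν`. -/
def ParetoDominates (P : SchoolChoice I S) (μ ν : I → S) : Prop :=
  (∀ i : I, P.rk i (μ i) ≤ P.rk i (ν i)) ∧ ∃ i : I, P.rk i (μ i) < P.rk i (ν i)

/-- `μ` is a Pareto-efficient matching. -/
def ParetoEfficient (P : SchoolChoice I S) (μ : I → S) : Prop :=
  P.IsMatching μ ∧ ∀ ν : I → S, P.IsMatching ν → ¬ P.ParetoDominates ν μ

end SchoolChoice

namespace SchoolChoice

open scoped Classical

variable {I S : Type} [Fintype I] [Fintype S] [DecidableEq I] [DecidableEq S]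
variable (P : SchoolChoice I S)

lemma propose_spec (R : I → Finset S) (i : I) (h : (Finset.univ \ R i).Nonempty) :
    P.propose R i ∈ Finset.univ \ R i ∧
      ∀ t ∈ Finset.univ \ R i, P.rk i (P.propose R i) ≤ P.rk i t := by
  unfold propose
  rw [dif_pos h]
  exact (Finset.exists_min_image (Finset.univ \ R i) (P.rk i) h).choose_spec

lemma null_not_mem_daR (n : ℕ) (i : I) : P.nullSchool ∉ P.daR n i := by
  induction n with
  | zero => simp [daR]
  | succ n ih =>
    simp only [daR, stepR, Finset.mem_union, Finset.mem_filter]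
    rintro (h | ⟨-, hrej⟩)
    · exact ih h
    · have hsub : (Finset.univ.filter fun j =>
          P.propose (P.daR n) j = P.nullSchool ∧
            P.prio P.nullSchool j < P.prio P.nullSchool i) ⊆ Finset.univ.erase i := by
        intro j hj
        rcases Finset.mem_filter.1 hj with ⟨-, -, hlt⟩
        exact Finset.mem_erase.2 ⟨fun h => by simp [h] at hlt, Finset.mem_univ j⟩
      have hcard := Finset.card_le_card hsub
      rw [Finset.card_erase_of_mem (Finset.mem_univ i), Finset.card_univ] at hcard
      have hpos : 0 < Fintype.card I := Fintype.card_pos_iff.2 ⟨i⟩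
      have := hrej.2.trans hcard
      rw [P.quota_null] at this
      omega

lemma daR_compl_nonempty (n : ℕ) (i : I) : (Finset.univ \ P.daR n i).Nonempty :=
  ⟨P.nullSchool, Finset.mem_sdiff.2 ⟨Finset.mem_univ _, P.null_not_mem_daR n i⟩⟩

lemma propose_daR_not_mem (n : ℕ) (i : I) : P.propose (P.daR n) i ∉ P.daR n i := by
  have := (P.propose_spec (P.daR n) i (P.daR_compl_nonempty n i)).1
  exact (Finset.mem_sdiff.1 this).2

lemma propose_daR_min (n : ℕ) (i : I) {t : S} (ht : t ∉ P.daR n i) :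
    P.rk i (P.propose (P.daR n) i) ≤ P.rk i t :=
  (P.propose_spec (P.daR n) i (P.daR_compl_nonempty n i)).2 t
    (Finset.mem_sdiff.2 ⟨Finset.mem_univ _, ht⟩)

lemma propose_persist {n : ℕ} {i : I} {s : S} (hp : P.propose (P.daR n) i = s)
    (hns : s ∉ P.daR (n + 1) i) : P.propose (P.daR (n + 1)) i = s := by
  have h1 := P.propose_spec (P.daR n) i (P.daR_compl_nonempty n i)
  have h2 := P.propose_spec (P.daR (n + 1)) i (P.daR_compl_nonempty (n + 1) i)
  set t := P.propose (P.daR (n + 1)) i with hT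
  have hsub : P.daR n i ⊆ P.daR (n + 1) i := by
    simp only [daR, stepR]; exact Finset.subset_union_left
  have htn : t ∉ P.daR n i := fun h => (Finset.mem_sdiff.1 h2.1).2 (hsub h)
  have hle1 : P.rk i t ≤ P.rk i s :=
    h2.2 s (Finset.mem_sdiff.2 ⟨Finset.mem_univ _, hns⟩)
  have hle2 : P.rk i s ≤ P.rk i t := by
    rw [← hp]
    exact h1.2 t (Finset.mem_sdiff.2 ⟨Finset.mem_univ _, htn⟩)
  exact P.rk_inj i (le_antisymm hle1 hle2)

/-- Counting lemma: among `B` at least `q` elements have fewer than `q`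
elements of `B` ranked below them by an injective score `f`. -/
lemma rank_count {f : I → ℕ} (hf : Function.Injective f) {B : Finset I} {q : ℕ}
    (hq : q ≤ B.card) :
    q ≤ (B.filter fun k => (B.filter fun j => f j < f k).card < q).card := by
  set r : I → ℕ := fun k => (B.filter fun j => f j < f k).card with hr
  have key : ∀ a b, a ∈ B → b ∈ B → f a < f b → r a < r b := by
    intro a b ha hb h
    apply Finset.card_lt_card
    rw [Finset.ssubset_iff_of_subset (by
      intro j hj
      rcases Finset.mem_filter.1 hj with ⟨hj1, hj2⟩
      exact Finset.mem_filter.2 ⟨hj1, hj2.trans h⟩)]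
    exact ⟨a, Finset.mem_filter.2 ⟨ha, h⟩,
      fun hx => lt_irrefl _ (Finset.mem_filter.1 hx).2⟩
  have hrlt : ∀ k ∈ B, r k < B.card := by
    intro k hk
    have hsub : B.filter (fun j => f j < f k) ⊆ B.erase k := by
      intro j hj
      rcases Finset.mem_filter.1 hj with ⟨hj1, hj2⟩
      exact Finset.mem_erase.2 ⟨fun h => by simp [h] at hj2, hj1⟩
    exact lt_of_le_of_lt (Finset.card_le_card hsub) (Finset.card_erase_lt_of_mem hk)
  have hinj : Set.InjOn r B := by
    intro a ha b hb hab
    by_contra hne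
    rcases lt_or_gt_of_ne (fun h => hne (hf h)) with h | h
    · exact absurd hab (ne_of_lt (key a b ha hb h))
    · exact absurd hab.symm (ne_of_lt (key b a hb ha h))
  have himg : B.image r = Finset.range B.card := by
    apply Finset.eq_of_subset_of_card_le
    · intro x hx
      rcases Finset.mem_image.1 hx with ⟨k, hk, rfl⟩
      exact Finset.mem_range.2 (hrlt k hk)
    · rw [Finset.card_range, Finset.card_image_of_injOn hinj]
  have hsub : Finset.range q ⊆ (B.filter fun k => r k < q).image r := by
    intro x hx
    have hx' : x ∈ B.image r := by
      rw [himg]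
      exact Finset.mem_range.2 (lt_of_lt_of_le (Finset.mem_range.1 hx) hq)
    rcases Finset.mem_image.1 hx' with ⟨k, hk, rfl⟩
    exact Finset.mem_image.2 ⟨k, Finset.mem_filter.2 ⟨hk, Finset.mem_range.1 hx⟩, rfl⟩
  calc q = (Finset.range q).card := (Finset.card_range q).symm
    _ ≤ ((B.filter fun k => r k < q).image r).card := Finset.card_le_card hsub
    _ ≤ (B.filter fun k => r k < q).card := Finset.card_image_le

/-- Once a school holds `quota s` students with priority better than `prio s i`,
it does so at every later round. -/
lemma reject_persist {n : ℕ} {s : S} {i : I}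
    (h : P.quota s ≤ (Finset.univ.filter fun k =>
      P.propose (P.daR n) k = s ∧ P.prio s k < P.prio s i).card) :
    ∀ m, n ≤ m → P.quota s ≤ (Finset.univ.filter fun k =>
      P.propose (P.daR m) k = s ∧ P.prio s k < P.prio s i).card := by
  intro m hm
  induction m, hm using Nat.le_induction with
  | base => exact h
  | succ m _ ih =>
    set B : Finset I := Finset.univ.filter fun k => P.propose (P.daR m) k = s with hB
    set A : Finset I := Finset.univ.filter fun k =>
      P.propose (P.daR m) k = s ∧ P.prio s k < P.prio s i with hA
    have hAB : A ⊆ B := by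
      intro k hk
      rcases Finset.mem_filter.1 hk with ⟨h1, h2, -⟩
      exact Finset.mem_filter.2 ⟨h1, h2⟩
    have hqB : P.quota s ≤ B.card := le_trans ih (Finset.card_le_card hAB)
    set C : Finset I := B.filter fun k =>
      (B.filter fun j => P.prio s j < P.prio s k).card < P.quota s with hC
    have hCcard : P.quota s ≤ C.card := rank_count (P.prio_inj s) hqB
    -- each member of C has priority better than i
    have hCprio : ∀ k ∈ C, P.prio s k < P.prio s i := by
      intro k hk
      rcases Finset.mem_filter.1 hk with ⟨hkB, hklt⟩
      by_contra hge
      push_neg at hge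
      have : A ⊆ B.filter fun j => P.prio s j < P.prio s k := by
        intro j hj
        rcases Finset.mem_filter.1 hj with ⟨h1, h2, h3⟩
        exact Finset.mem_filter.2 ⟨Finset.mem_filter.2 ⟨h1, h2⟩, lt_of_lt_of_le h3 hge⟩
      exact absurd (le_trans ih (Finset.card_le_card this)) (not_le.2 hklt)
    -- each member of C still proposes to s in the next round
    have hCnext : ∀ k ∈ C, P.propose (P.daR (m + 1)) k = s := by
      intro k hk
      rcases Finset.mem_filter.1 hk with ⟨hkB, hklt⟩
      have hks : P.propose (P.daR m) k = s := (Finset.mem_filter.1 hkB).2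
      apply P.propose_persist hks
      -- s ∉ daR (m+1) k
      simp only [daR, stepR, Finset.mem_union, Finset.mem_filter]
      rintro (hmem | ⟨-, hrej⟩)
      · exact P.propose_daR_not_mem m k (hks ▸ hmem)
      · -- rejectsAt (daR m) s k is false because fewer than quota better proposers
        have heq : (Finset.univ.filter fun j =>
            P.propose (P.daR m) j = s ∧ P.prio s j < P.prio s k)
            = B.filter fun j => P.prio s j < P.prio s k := by
          ext j
          simp [hB, Finset.mem_filter, and_assoc]
        have h2 := hrej.2
        rw [heq] at h2
        exact absurd h2 (not_le.2 hklt)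
    have hfinal : C ⊆ Finset.univ.filter fun k =>
        P.propose (P.daR (m + 1)) k = s ∧ P.prio s k < P.prio s i := by
      intro k hk
      exact Finset.mem_filter.2 ⟨Finset.mem_univ _, hCnext k hk, hCprio k hk⟩
    exact le_trans hCcard (Finset.card_le_card hfinal)

lemma daR_fix_of_eq {n : ℕ} (h : P.daR (n + 1) = P.daR n) :
    ∀ m, n ≤ m → P.daR m = P.daR n := by
  intro m hm
  induction m, hm using Nat.le_induction with
  | base => rfl
  | succ m _ ih =>
    show P.stepR (P.daR m) = P.daR n
    rw [ih]
    exact h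

lemma exists_daR_fix :
    ∃ n ≤ Fintype.card I * Fintype.card S, P.daR (n + 1) = P.daR n := by
  by_contra hcon
  push_neg at hcon
  set F : ℕ → ℕ := fun n => ∑ i : I, (P.daR n i).card with hF
  have hgrow : ∀ n ≤ Fintype.card I * Fintype.card S, F n < F (n + 1) := by
    intro n hn
    have hne := hcon n hn
    have hex : ∃ i : I, P.daR n i ⊂ P.daR (n + 1) i := by
      by_contra hno
      push_neg at hno
      apply hne
      funext i
      have hsub : P.daR n i ⊆ P.daR (n + 1) i := by
        simp only [daR, stepR]; exact Finset.subset_union_left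
      apply Finset.Subset.antisymm _ hsub
      intro x hx
      by_contra hxn
      exact hno i ((Finset.ssubset_iff_of_subset hsub).2 ⟨x, hx, hxn⟩)
    rcases hex with ⟨i0, hi0⟩
    apply Finset.sum_lt_sum
    · intro i _
      exact Finset.card_le_card (by simp only [daR, stepR]; exact Finset.subset_union_left)
    · exact ⟨i0, Finset.mem_univ i0, Finset.card_lt_card hi0⟩
  have hmono : ∀ n ≤ Fintype.card I * Fintype.card S + 1, n ≤ F n := by
    intro n hn
    induction n with
    | zero => exact Nat.zero_le _
    | succ n ih =>
      have h1 : n ≤ F n := ih (by omega)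
      have h2 : F n < F (n + 1) := hgrow n (by omega)
      omega
  have hub : F (Fintype.card I * Fintype.card S + 1) ≤ Fintype.card I * Fintype.card S := by
    have hb : ∀ i : I, (P.daR (Fintype.card I * Fintype.card S + 1) i).card ≤ Fintype.card S := by
      intro i
      simpa using Finset.card_le_card (Finset.subset_univ (P.daR (Fintype.card I * Fintype.card S + 1) i))
    calc F (Fintype.card I * Fintype.card S + 1)
        ≤ ∑ _i : I, Fintype.card S := Finset.sum_le_sum (fun i _ => hb i)
      _ = Fintype.card I * Fintype.card S := by
          rw [Finset.sum_const, Finset.card_univ, smul_eq_mul]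
  have := hmono (Fintype.card I * Fintype.card S + 1) le_rfl
  omega

lemma stepR_daR_fix :
    P.stepR (P.daR (Fintype.card I * Fintype.card S + 1))
      = P.daR (Fintype.card I * Fintype.card S + 1) := by
  rcases P.exists_daR_fix with ⟨n, hn, hfix⟩
  have h1 := P.daR_fix_of_eq hfix (Fintype.card I * Fintype.card S + 1) (by omega)
  have h2 := P.daR_fix_of_eq hfix (Fintype.card I * Fintype.card S + 2) (by omega)
  calc P.stepR (P.daR (Fintype.card I * Fintype.card S + 1))
      = P.daR (Fintype.card I * Fintype.card S + 2) := rfl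
    _ = P.daR n := h2
    _ = P.daR (Fintype.card I * Fintype.card S + 1) := h1.symm

lemma no_reject_at_fix (s : S) (i : I) :
    ¬ P.rejectsAt (P.daR (Fintype.card I * Fintype.card S + 1)) s i := by
  intro hrej
  set N := Fintype.card I * Fintype.card S + 1 with hN
  have hmem : s ∈ P.stepR (P.daR N) i := by
    simp only [stepR, Finset.mem_union, Finset.mem_filter]
    exact Or.inr ⟨Finset.mem_univ _, hrej⟩
  rw [P.stepR_daR_fix] at hmem
  exact P.propose_daR_not_mem N i (hrej.1 ▸ hmem)

/-- Key structural lemma: an advantaged student never envies a marginalized one. -/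
lemma no_envy_Y_to_Z {Y Z : Finset I}
    (hprio : ∀ s : S, ∀ y ∈ Y, ∀ z ∈ Z, P.prio s y < P.prio s z)
    {i j : I} (hi : i ∈ Y) (hj : j ∈ Z) : ¬ P.Envy i j := by
  intro henvy
  set N := Fintype.card I * Fintype.card S + 1 with hN
  set s := P.DA j with hs
  have hDA : ∀ k : I, P.DA k = P.propose (P.daR N) k := fun k => rfl
  -- s has been rejected for i at some round
  have hsmem : s ∈ P.daR N i := by
    by_contra hns
    have := P.propose_daR_min N i hns
    rw [← hDA i] at this
    exact absurd henvy (not_lt.2 this)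
  have hreject : ∃ n, P.rejectsAt (P.daR n) s i := by
    have : ∀ n, s ∈ P.daR n i → ∃ n', P.rejectsAt (P.daR n') s i := by
      intro n
      induction n with
      | zero => simp [daR]
      | succ n ih =>
        intro hmem
        simp only [daR, stepR, Finset.mem_union, Finset.mem_filter] at hmem
        rcases hmem with hmem | ⟨-, hrej⟩
        · exact ih hmem
        · exact ⟨n, hrej⟩
    exact this N hsmem
  rcases hreject with ⟨n, hrej⟩
  -- at every later round, quota s many better-than-i students propose to s
  have hpersist : P.quota s ≤ (Finset.univ.filter fun k =>
      P.propose (P.daR (max n N)) k = s ∧ P.prio s k < P.prio s i).card :=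
    P.reject_persist hrej.2 (max n N) (le_max_left n N)
  -- so j, being worse than i, is rejected by s at round max n N : contradiction
  have hMeq : P.daR (max n N) = P.daR N := by
    rcases P.exists_daR_fix with ⟨n0, hn0, hfix⟩
    rw [P.daR_fix_of_eq hfix (max n N) (le_trans (by omega) (le_max_right n N)),
      P.daR_fix_of_eq hfix N (by omega)]
  rw [hMeq] at hpersist
  apply P.no_reject_at_fix s j
  refine ⟨(hDA j).symm, le_trans hpersist (Finset.card_le_card ?_)⟩
  intro k hk
  rcases Finset.mem_filter.1 hk with ⟨h1, h2, h3⟩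
  exact Finset.mem_filter.2 ⟨h1, h2, h3.trans (hprio s i hi j hj)⟩

end SchoolChoice

/-- No directed cycle of the envy digraph `G^DA(P)` contains
both an advantaged and a marginalized student: every directed cycle lies
entirely within `Y` or entirely within `Z`. -/
theorem no_mixed_cycles {I S : Type} [Fintype I] [Fintype S]
    [DecidableEq I] [DecidableEq S] (P : SchoolChoice I S)
    (Y Z : Finset I) (hY : Y.Nonempty) (hZ : Z.Nonempty)
    (hdisj : Disjoint Y Z) (hcover : Y ∪ Z = Finset.univ)
    (hprio : ∀ s : S, ∀ y ∈ Y, ∀ z ∈ Z, P.prio s y < P.prio s z) :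
    ∀ (m : ℕ) (c : ℕ → I), 0 < m → c m = c 0 →
      (∀ k < m, P.Envy (c k) (c (k + 1))) →
      (∀ k ≤ m, c k ∈ Y) ∨ (∀ k ≤ m, c k ∈ Z) := by
  intro m c hm hcm hedges
  have hmem : ∀ i : I, i ∈ Y ∨ i ∈ Z := by
    intro i
    have : i ∈ Y ∪ Z := hcover ▸ Finset.mem_univ i
    exact Finset.mem_union.1 this
  -- Y-membership propagates along edges
  have hprop : ∀ k < m, c k ∈ Y → c (k + 1) ∈ Y := by
    intro k hk hck
    rcases hmem (c (k + 1)) with h | h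
    · exact h
    · exact absurd (hedges k hk) (P.no_envy_Y_to_Z hprio hck h)
  have hpropagate : ∀ a b, a ≤ b → b ≤ m → c a ∈ Y → c b ∈ Y := by
    intro a b hab hbm hca
    induction b, hab using Nat.le_induction with
    | base => exact hca
    | succ b hab ih => exact hprop b (by omega) (ih (by omega))
  rcases hmem (c 0) with h0 | h0
  · left
    intro k hk
    exact hpropagate 0 k (Nat.zero_le k) hk h0
  · right
    intro k hk
    by_contra hkZ
    rcases hmem (c k) with hkY | hkY
    · have : c m ∈ Y := hpropagate k m hk le_rfl hkY
      rw [hcm] at this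
      exact Finset.disjoint_left.1 hdisj this h0
    · exact hkZ hkY
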